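/- Let G = (V, E) be a finite simple graph, let G̃ be its subdivision graph, and let f̃ be the associated function. If there exist k unimodal functions f_1, …, f_k on G̃ with Σ_{i=1}^{k} f_i(x) = f̃(x) for every vertex x of G̃, then G has a vertex cover consisting of at most k vertices. -/

import Mathlib

open SimpleGraph

/-- A set of vertices induces a tree in `G`. -/
def InducesTree {V : Type*} (G : SimpleGraph V) (S : Set V) : Prop :=
  (G.induce S).IsTree

/-- `f` is unimodal on `G`: every positive superlevel set is empty or induces a tree. -/
def UnimodalOn {V : Type*} (G : SimpleGraph V) (f : V → NNReal) : Prop :=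
  ∀ c : NNReal, 0 < c → {v | c ≤ f v} = ∅ ∨ InducesTree G {v | c ≤ f v}

/-- The subdivision graph of `G`: one new midpoint vertex on each edge of `G`,
adjacent exactly to the two endpoints of that edge. -/
def subdivGraph {V : Type*} (G : SimpleGraph V) : SimpleGraph (V ⊕ G.edgeSet) where
  Adj x y :=
    match x, y with
    | Sum.inl v, Sum.inr e => v ∈ (e : Sym2 V)
    | Sum.inr e, Sum.inl v => v ∈ (e : Sym2 V)
    | _, _ => False
  symm := by
    constructor
    rintro (v | e) (w | e2) h
    · exact h.elim
    · exact h
    · exact h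
    · exact h.elim
  loopless := by
    constructor
    rintro (v | e) h
    · exact h.elim
    · exact h.elim

/-- The canonical function on the subdivision graph: the degree on original vertices,
and `1` on midpoint vertices. -/
def ftilde {V : Type*} [Fintype V] (G : SimpleGraph V) [DecidableRel G.Adj] :
    V ⊕ G.edgeSet → NNReal
  | Sum.inl v => (G.degree v : NNReal)
  | Sum.inr _ => 1

/-!
For each `i` let `s i` be a vertex of `G` at which `f i` is maximal among the vertices of `G`;
these `k` vertices cover `G`. If `v ≠ s i`, the superlevel set of `f i` at `f i v` is a tree
containing `v` and `s i`, so `v` has a neighbour there: `f i v ≤ f i (m_e)` for an edge `e ∋ v`.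
If `v` is none of the `s i`, summing over `i` and comparing with `deg v = ∑_{e ∋ v} 1` gives
`f i v = ∑_{e ∋ v} f i (m_e)` for every `i`, so `f i` is positive on at most one midpoint next
to `v`. For an edge `uw` missed by all `s i`, pick `i` with `c := f i (m_uw) > 0`: in the
superlevel set at `c`, the vertices `u, m_uw, w` then form a component not containing `s i`.
-/

open Finset

namespace SimpleGraph

variable {W : Type*} {H : SimpleGraph W}

lemma Connected.exists_adj_mem_notMem_of_induce {T D : Set W} (hT : (H.induce T).Connected)
    {x y : W} (hxT : x ∈ T) (hxD : x ∈ D) (hyT : y ∈ T) (hyD : y ∉ D) :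
    ∃ a ∈ T ∩ D, ∃ b ∈ T \ D, H.Adj a b := by
  obtain ⟨p⟩ := hT.preconnected ⟨x, hxT⟩ ⟨y, hyT⟩
  obtain ⟨d, -, hd₁, hd₂⟩ := p.exists_boundary_dart (Subtype.val ⁻¹' D) hxD hyD
  exact ⟨d.fst, ⟨d.fst.2, hd₁⟩, d.snd, ⟨d.snd.2, hd₂⟩, d.adj⟩

end SimpleGraph

namespace UnimodalOn

variable {W : Type*} {H : SimpleGraph W} {f : W → NNReal}

lemma exists_adj_superlevel_of_mem_notMem (hf : UnimodalOn H f) {c : NNReal} (hc : 0 < c)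
    {D : Set W} {x y : W} (hx : c ≤ f x) (hxD : x ∈ D) (hy : c ≤ f y) (hyD : y ∉ D) :
    ∃ a ∈ D, ∃ b ∉ D, c ≤ f b ∧ H.Adj a b := by
  have htree : InducesTree H {v | c ≤ f v} :=
    (hf c hc).resolve_left (Set.nonempty_iff_ne_empty.1 ⟨x, hx⟩)
  obtain ⟨a, ⟨-, ha⟩, b, ⟨hb, hbD⟩, hab⟩ :=
    htree.connected.exists_adj_mem_notMem_of_induce hx hxD hy hyD
  exact ⟨a, ha, b, hbD, hb, hab⟩

lemma exists_adj_le_of_le (hf : UnimodalOn H f) {x y : W} (hxy : x ≠ y) (hx : 0 < f x)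
    (hle : f x ≤ f y) : ∃ z, H.Adj x z ∧ f x ≤ f z := by
  obtain ⟨a, rfl, b, -, hb, hab⟩ :=
    hf.exists_adj_superlevel_of_mem_notMem hx le_rfl (Set.mem_singleton x) hle hxy.symm
  exact ⟨b, hab, hb⟩

end UnimodalOn

section Subdivision

variable {V : Type*} {G : SimpleGraph V}

@[simp]
lemma subdivGraph_adj_inl_inr {v : V} {e : G.edgeSet} :
    (subdivGraph G).Adj (.inl v) (.inr e) ↔ v ∈ (e : Sym2 V) := Iff.rfl

@[simp]
lemma subdivGraph_adj_inr_inl {v : V} {e : G.edgeSet} :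
    (subdivGraph G).Adj (.inr e) (.inl v) ↔ v ∈ (e : Sym2 V) := Iff.rfl

@[simp]
lemma not_subdivGraph_adj_inl_inl {v w : V} : ¬(subdivGraph G).Adj (.inl v) (.inl w) := id

@[simp]
lemma not_subdivGraph_adj_inr_inr {e e' : G.edgeSet} :
    ¬(subdivGraph G).Adj (.inr e) (.inr e') := id

variable [Fintype V] [DecidableEq V] [DecidableRel G.Adj]

variable (G) in
def incidentEdges (v : V) : Finset G.edgeSet :=
  (G.incidenceFinset v).subtype (· ∈ G.edgeSet)

@[simp]
lemma mem_incidentEdges {v : V} {e : G.edgeSet} :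
    e ∈ incidentEdges G v ↔ v ∈ (e : Sym2 V) := by
  simp [incidentEdges, incidenceSet, e.2]

lemma card_incidentEdges (v : V) : #(incidentEdges G v) = G.degree v := by
  rw [incidentEdges, card_subtype, filter_true_of_mem fun e he => G.incidenceSet_subset v
    (G.mem_incidenceFinset v e |>.1 he), card_incidenceFinset_eq_degree]

lemma ftilde_inl_eq_sum (v : V) :
    ftilde G (.inl v) = ∑ e ∈ incidentEdges G v, ftilde G (.inr e) := by
  simp [ftilde, card_incidentEdges]

end Subdivision

lemma Finset.eq_zero_of_sum_le_of_ne {ι M : Type*} [AddCommMonoid M] [PartialOrder M]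
    [CanonicallyOrderedAdd M] [IsOrderedCancelAddMonoid M] {s : Finset ι} {g : ι → M} {a b : ι}
    (h : ∑ x ∈ s, g x ≤ g a) (ha : a ∈ s) (hb : b ∈ s) (hba : b ≠ a) : g b = 0 := by
  classical
  rw [← add_sum_erase s g ha, add_le_iff_nonpos_right, nonpos_iff_eq_zero,
    sum_eq_zero_iff] at h
  exact h b (mem_erase.2 ⟨hba, hb⟩)

section Decomposition

variable {V : Type*} [Fintype V] [DecidableEq V] {G : SimpleGraph V} [DecidableRel G.Adj]

lemma UnimodalOn.exists_incidentEdges_le {g : V ⊕ G.edgeSet → NNReal}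
    (hg : UnimodalOn (subdivGraph G) g) {v p : V} (hvp : v ≠ p) (hpos : 0 < g (.inl v))
    (hle : g (.inl v) ≤ g (.inl p)) : ∃ e ∈ incidentEdges G v, g (.inl v) ≤ g (.inr e) := by
  obtain ⟨z, hvz, hz⟩ := hg.exists_adj_le_of_le (Sum.inl_injective.ne hvp) hpos hle
  rcases z with w | e
  · exact absurd hvz not_subdivGraph_adj_inl_inl
  · exact ⟨e, mem_incidentEdges.2 hvz, hz⟩

lemma UnimodalOn.le_sum_incidentEdges {g : V ⊕ G.edgeSet → NNReal}
    (hg : UnimodalOn (subdivGraph G) g) {v p : V} (hvp : v ≠ p)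
    (hle : g (.inl v) ≤ g (.inl p)) : g (.inl v) ≤ ∑ e ∈ incidentEdges G v, g (.inr e) := by
  rcases eq_zero_or_pos (g (.inl v)) with h0 | hpos
  · exact h0 ▸ zero_le
  obtain ⟨e, he, hle'⟩ := hg.exists_incidentEdges_le hvp hpos hle
  exact hle'.trans (single_le_sum_of_canonicallyOrdered (f := fun e => g (.inr e)) he)

variable {ι : Type*} [Fintype ι] {f : ι → V ⊕ G.edgeSet → NNReal}
  {s : ι → V} (hf : ∀ i, UnimodalOn (subdivGraph G) (f i))
  (hsum : ∀ x, ∑ i, f i x = ftilde G x) (hs : ∀ i x, f i (.inl x) ≤ f i (.inl (s i)))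

include hf hsum hs in
lemma eq_sum_incidentEdges_of_forall_ne {v : V} (hv : ∀ i, s i ≠ v) (i : ι) :
    f i (.inl v) = ∑ e ∈ incidentEdges G v, f i (.inr e) := by
  have hle : ∀ j ∈ univ, f j (.inl v) ≤ ∑ e ∈ incidentEdges G v, f j (.inr e) :=
    fun j _ => (hf j).le_sum_incidentEdges (hv j).symm (hs j v)
  refine (sum_eq_sum_iff_of_le hle).1 ?_ i (mem_univ i)
  rw [sum_comm, hsum, ftilde_inl_eq_sum]
  simp only [hsum]

include hf hsum hs in
lemma eq_zero_of_mem_incidentEdges_of_pos {v : V} (hv : ∀ i, s i ≠ v) {i : ι}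
    {e e' : G.edgeSet} (he : e ∈ incidentEdges G v) (hpos : 0 < f i (.inr e))
    (he' : e' ∈ incidentEdges G v) (hne : e' ≠ e) : f i (.inr e') = 0 := by
  have hv_eq := eq_sum_incidentEdges_of_forall_ne hf hsum hs hv i
  have hv_pos : 0 < f i (.inl v) := hv_eq ▸ hpos.trans_le
    (single_le_sum_of_canonicallyOrdered (f := fun e => f i (.inr e)) he)
  obtain ⟨e₀, he₀, hle⟩ := (hf i).exists_incidentEdges_le (hv i).symm hv_pos (hs i v)
  have hsum_le : ∑ x ∈ incidentEdges G v, f i (.inr x) ≤ f i (.inr e₀) := hv_eq ▸ hle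
  have hzero : ∀ x ∈ incidentEdges G v, x ≠ e₀ → f i (.inr x) = 0 := fun x hx hx₀ =>
    eq_zero_of_sum_le_of_ne (g := fun x => f i (.inr x)) hsum_le he₀ hx hx₀
  obtain rfl : e = e₀ := by
    by_contra h
    exact hpos.ne' (hzero e he h)
  exact hzero e' he' hne

include hf hsum hs in
lemma mem_range_or_mem_range_of_adj {u w : V} (huw : G.Adj u w) :
    u ∈ Set.range s ∨ w ∈ Set.range s := by
  simp only [Set.mem_range]
  by_contra! ⟨hu, hw⟩
  set m : G.edgeSet := ⟨s(u, w), huw⟩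
  obtain ⟨i, -, hi⟩ : ∃ i ∈ univ, f i (.inr m) ≠ 0 :=
    exists_ne_zero_of_sum_ne_zero (by simp [hsum, ftilde])
  have hpos : 0 < f i (.inr m) := pos_iff_ne_zero.2 hi
  have hnbr : ∀ v, (∀ j, s j ≠ v) → m ∈ incidentEdges G v → ∀ b,
      (subdivGraph G).Adj (.inl v) b → f i (.inr m) ≤ f i b → b = .inr m := by
    rintro v hv hm (b | e) hvb hb
    · exact absurd hvb not_subdivGraph_adj_inl_inl
    by_contra hne
    have := eq_zero_of_mem_incidentEdges_of_pos hf hsum hs hv hm hpos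
      (mem_incidentEdges.2 hvb) (fun h => hne (h ▸ rfl))
    exact hi (le_antisymm (this ▸ hb) zero_le)
  have hmu : m ∈ incidentEdges G u := mem_incidentEdges.2 (Sym2.mem_mk_left u w)
  have hmw : m ∈ incidentEdges G w := mem_incidentEdges.2 (Sym2.mem_mk_right u w)
  have hmu_le : f i (.inr m) ≤ f i (.inl u) :=
    eq_sum_incidentEdges_of_forall_ne hf hsum hs hu i ▸
      single_le_sum_of_canonicallyOrdered (f := fun e => f i (.inr e)) hmu
  obtain ⟨a, ha, b, hb, hcb, hab⟩ := (hf i).exists_adj_superlevel_of_mem_notMem hpos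
    (D := {.inl u, .inl w, .inr m}) le_rfl (by simp) (hmu_le.trans (hs i u))
    (by simp [hu i, hw i])
  simp only [Set.mem_insert_iff, Set.mem_singleton_iff, not_or] at ha hb
  rcases ha with rfl | rfl | rfl
  · exact hb.2.2 (hnbr u hu hmu b hab hcb)
  · exact hb.2.2 (hnbr w hw hmw b hab hcb)
  · rcases b with v | e
    · rcases Sym2.mem_iff.1 (subdivGraph_adj_inr_inl.1 hab) with rfl | rfl
      exacts [hb.1 rfl, hb.2.1 rfl]
    · exact not_subdivGraph_adj_inr_inr hab

end Decomposition

/-- If the canonical function on the subdivision graph of `G` has a unimodal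
decomposition into `k` components, then `G` has a vertex cover of at most `k` vertices. -/
theorem unimodal_decomposition_imp_vertexCover
    {V : Type*} [Fintype V] [DecidableEq V] (G : SimpleGraph V) [DecidableRel G.Adj]
    (k : ℕ) (f : Fin k → (V ⊕ G.edgeSet) → NNReal)
    (hf : ∀ i, UnimodalOn (subdivGraph G) (f i))
    (hsum : ∀ x, ∑ i, f i x = ftilde G x) :
    ∃ S : Finset V, (∀ u w, G.Adj u w → u ∈ S ∨ w ∈ S) ∧ S.card ≤ k := by
  rcases isEmpty_or_nonempty V with _ | _
  · exact ⟨∅, fun u => isEmptyElim u, zero_le⟩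
  choose s hs using fun i => Finite.exists_max fun x => f i (.inl x)
  refine ⟨univ.image s, fun u w huw => ?_, card_image_le.trans (card_fin k).le⟩
  simpa using mem_range_or_mem_range_of_adj hf hsum hs huw
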